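/- arXiv:2004.02098 — 2 statements merged into one kernel-verified Lean document; each statement's English description precedes it below -/
import Mathlib

section
/- Let N be a Nijenhuis operator on a pre-Lie algebra (g, ·). Then for all natural numbers k, l, the pre-Lie structures ·_{N^k} and ·_{N^l} are compatible: any linear combination a·_{N^k} + b·_{N^l} is again a pre-Lie multiplication on g. -/
def PreLieFn {g : Type*} [AddCommGroup g] (m : g → g → g) : Prop :=
  ∀ x y z : g, m (m x y) z - m x (m y z) = m (m y x) z - m y (m x z)

def NijFn {g : Type*} [AddCommGroup g] (m : g → g → g) (N : g → g) : Prop :=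
  ∀ x y : g, m (N x) (N y) = N (m (N x) y + m x (N y) - N (m x y))

def deform {g : Type*} [AddCommGroup g] (m : g → g → g) (N : g → g) : g → g → g :=
  fun x y => m (N x) y + m x (N y) - N (m x y)

/-!
The combination `a ·_{N^k} + b ·_{N^l}` is the deformed product `·_P` for `P = a N^k + b N^l`,
since `deform` is linear in the operator. It therefore suffices that `P` is again Nijenhuis,
because deforming a pre-Lie product by a Nijenhuis operator gives a pre-Lie product.
Expanding `P x · P y`, this reduces to the Nijenhuis identities of `N^k` and `N^l` together with
the mixed identity `N^j x · N^k y + N^k x · N^j y = N^j (x ·_{N^k} y) + N^k (x ·_{N^j} y)`,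
proved for all powers by induction from the Nijenhuis identity of `N`.
-/

def associatorFn {g : Type*} [AddCommGroup g] (m : g → g → g) (x y z : g) : g :=
  m (m x y) z - m x (m y z)

def NijCompatFn {g : Type*} [AddCommGroup g] (m : g → g → g) (P Q : g → g) : Prop :=
  ∀ x y : g, m (P x) (Q y) + m (Q x) (P y) = P (deform m Q x y) + Q (deform m P x y)

section Nijenhuis

variable {R g : Type*} [CommRing R] [AddCommGroup g] [Module R g] {m : g →ₗ[R] g →ₗ[R] g}

theorem deform_smul_add_smul (m : g →ₗ[R] g →ₗ[R] g) (P Q : Module.End R g) (a b : R)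
    (x y : g) :
    deform (fun x y => m x y) ⇑(a • P + b • Q) x y =
      a • deform (fun x y => m x y) P x y + b • deform (fun x y => m x y) Q x y := by
  simp only [deform, LinearMap.add_apply, LinearMap.smul_apply, map_add, map_smul,
    smul_add, smul_sub]
  module

theorem associatorFn_deform {P : Module.End R g} (hP : NijFn (fun x y => m x y) P)
    (x y z : g) :
    associatorFn (deform (fun x y => m x y) P) x y z =
      associatorFn (fun x y => m x y) (P x) (P y) z +
        associatorFn (fun x y => m x y) (P x) y (P z) +
        associatorFn (fun x y => m x y) x (P y) (P z) -
        P (associatorFn (fun x y => m x y) (P x) y z +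
          associatorFn (fun x y => m x y) x (P y) z +
          associatorFn (fun x y => m x y) x y (P z)) +
        P (P (associatorFn (fun x y => m x y) x y z)) := by
  have hP' : ∀ u v : g, m (P u) (P v) = P (m (P u) v + m u (P v) - P (m u v)) := hP
  simp only [associatorFn, deform]
  rw [← hP' x y, ← hP' y z]
  simp only [map_add, map_sub, LinearMap.add_apply, LinearMap.sub_apply]
  rw [hP' (m x y) z, hP' x (m y z)]
  simp only [map_add, map_sub]
  abel

theorem PreLieFn.deform {P : Module.End R g} (hm : PreLieFn (fun x y => m x y))
    (hP : NijFn (fun x y => m x y) P) : PreLieFn (deform (fun x y => m x y) P) := by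
  have hm' : ∀ u v w : g, associatorFn (fun x y => m x y) u v w =
      associatorFn (fun x y => m x y) v u w := hm
  intro x y z
  change associatorFn _ x y z = associatorFn _ y x z
  rw [associatorFn_deform hP, associatorFn_deform hP, hm' (P x) (P y), hm' (P x) y,
    hm' x (P y), hm' (P x) y z, hm' x (P y) z, hm' x y (P z), hm' x y z]
  simp only [map_add]
  abel

theorem NijFn.smul_add_smul {P Q : Module.End R g} (hP : NijFn (fun x y => m x y) P)
    (hQ : NijFn (fun x y => m x y) Q) (hPQ : NijCompatFn (fun x y => m x y) P Q) (a b : R) :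
    NijFn (fun x y => m x y) ⇑(a • P + b • Q) := by
  intro x y
  change _ = (a • P + b • Q) (deform (fun x y => m x y) ⇑(a • P + b • Q) x y)
  have hPQ' : m (P x) (Q y) + m (Q x) (P y) =
      P (deform (fun x y => m x y) Q x y) + Q (deform (fun x y => m x y) P x y) := hPQ x y
  have hP' : m (P x) (P y) = P (deform (fun x y => m x y) P x y) := hP x y
  have hQ' : m (Q x) (Q y) = Q (deform (fun x y => m x y) Q x y) := hQ x y
  rw [deform_smul_add_smul]
  simp only [LinearMap.add_apply, LinearMap.smul_apply, map_add, map_smul, smul_add, hP', hQ']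
  linear_combination (norm := module) (a * b) • hPQ'

theorem Module.End.pow_apply_apply_comm (N : Module.End R g) (n : ℕ) (u : g) :
    (N ^ n) (N u) = N ((N ^ n) u) :=
  LinearMap.congr_fun (pow_mul_comm' N n) u

theorem NijFn.nijCompatFn_pow {N : Module.End R g} (hN : NijFn (fun x y => m x y) N) :
    ∀ j k : ℕ, NijCompatFn (fun x y => m x y) ⇑(N ^ j) ⇑(N ^ k) := by
  have hN' : ∀ x y : g, m (N x) (N y) = N (m (N x) y + m x (N y) - N (m x y)) := hN
  intro j
  induction j with
  | zero =>
    intro k x y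
    simp only [deform, pow_zero, Module.End.one_apply, map_sub, map_add]
    abel
  | succ j ihj =>
    intro k
    induction k with
    | zero =>
      intro x y
      simp only [deform, pow_zero, Module.End.one_apply, map_sub, map_add]
      abel
    | succ k ihk =>
      intro x y
      -- Nijenhuis identity of `N` at `(N^j x, N^k y)` and `(N^k x, N^j y)`, then the cases
      -- `(j+1, k)`, `(j, k+1)` and `(j, k)`.
      have hj1k := ihk x y
      have hjk1 := ihj (k + 1) x y
      have hjk := ihj k x y
      simp only [deform, pow_succ', Module.End.mul_apply] at hj1k hjk1 hjk ⊢
      rw [hN' ((N ^ j) x) ((N ^ k) y), hN' ((N ^ k) x) ((N ^ j) y)]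
      rw [eq_sub_of_add_eq hj1k, eq_sub_of_add_eq hjk1, eq_sub_of_add_eq hjk]
      simp only [map_add, map_sub, Module.End.pow_apply_apply_comm]
      abel

theorem NijFn.pow {N : Module.End R g} (hN : NijFn (fun x y => m x y) N) (k : ℕ) :
    NijFn (fun x y => m x y) ⇑(N ^ k) := by
  have hN' : ∀ x y : g, m (N x) (N y) = N (m (N x) y + m x (N y) - N (m x y)) := hN
  induction k with
  | zero => intro x y; simp only [pow_zero, Module.End.one_apply]; abel
  | succ k ih =>
    intro x y
    have hcompat := hN.nijCompatFn_pow (k + 1) k x y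
    simp only [deform, pow_succ', Module.End.mul_apply] at hcompat ⊢
    rw [hN' ((N ^ k) x) ((N ^ k) y), eq_sub_of_add_eq hcompat,
      show m ((N ^ k) x) ((N ^ k) y) = _ from ih x y]
    simp only [map_add, map_sub, Module.End.pow_apply_apply_comm]
    abel

end Nijenhuis

/-- the deformed pre-Lie structures `·_{N^k}` and `·_{N^l}` are
compatible: any linear combination is again a pre-Lie multiplication. -/
theorem power_deform_compatible {K g : Type*} [Field K] [AddCommGroup g] [Module K g]
    (m : g →ₗ[K] g →ₗ[K] g) (hm : PreLieFn (fun x y => m x y))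
    (N : Module.End K g) (hN : NijFn (fun x y => m x y) N) :
    ∀ (k l : ℕ) (a b : K),
      PreLieFn (fun x y : g =>
        a • deform (fun x y => m x y) (fun a : g => (N ^ k) a) x y +
        b • deform (fun x y => m x y) (fun a : g => (N ^ l) a) x y) := by
  intro k l a b
  have hcomb : (fun x y : g =>
      a • deform (fun x y => m x y) (fun a : g => (N ^ k) a) x y +
      b • deform (fun x y => m x y) (fun a : g => (N ^ l) a) x y) =
      deform (fun x y => m x y) ⇑(a • N ^ k + b • N ^ l) :=
    funext₂ fun x y => (deform_smul_add_smul m (N ^ k) (N ^ l) a b x y).symm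
  rw [hcomb]
  exact hm.deform ((hN.pow k).smul_add_smul (hN.pow l) (hN.nijCompatFn_pow k l) a b)
end

section
/- Let T: V → g be an O-operator on a bimodule (V; L, R) over a pre-Lie algebra (g, ·). Define 𝔏^T, ℜ^T: V → gl(g) by 𝔏^T_u x = T(u)·x − T(R_x u) and ℜ^T_u x = x·T(u) − T(L_x u). Then (g; 𝔏^T, ℜ^T) is a bimodule over the pre-Lie algebra (V, ·^T), where u·^T v = L_{T(u)}v + R_{T(v)}u. -/
def BimodFn {g V : Type*} [AddCommGroup g] [AddCommGroup V]
    (m : g → g → g) (L R : g → V → V) : Prop :=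
  (∀ (x y : g) (u : V), L x (L y u) - L (m x y) u = L y (L x u) - L (m y x) u) ∧
  (∀ (x y : g) (u : V), L x (R y u) - R y (L x u) = R (m x y) u - R y (R x u))

def IsOOp {K g V : Type*} [Field K] [AddCommGroup g] [Module K g]
    [AddCommGroup V] [Module K V]
    (m : g →ₗ[K] g →ₗ[K] g) (L R : g →ₗ[K] Module.End K V) (T : V →ₗ[K] g) : Prop :=
  ∀ u v : V, m (T u) (T v) = T (L (T u) v + R (T v) u)

section

variable {K : Type*} [CommRing K]

/-- A pre-Lie algebra `A` modulo a subalgebra `B` is a `B`-bimodule. Here `B` is the image of `ι`,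
`π` is the quotient map and `s` is a section of `π` modulo `B`. -/
theorem PreLieFn.bimodFn_quotient {A V W : Type*} [AddCommGroup A] [Module K A]
    [AddCommGroup W] [Module K W] [AddCommGroup V]
    {μ : A →ₗ[K] A →ₗ[K] A} (hμ : PreLieFn (fun a b => μ a b))
    {n : V → V → V} {ι : V → A} (hι : ∀ u v, ι (n u v) = μ (ι u) (ι v))
    {π : A →ₗ[K] W} (hπι : ∀ u, π (ι u) = 0)
    {s : W → A} (hs : ∀ a, ∃ u, a = s (π a) + ι u) :
    BimodFn n (fun u w => π (μ (ι u) (s w))) (fun u w => π (μ (s w) (ι u))) := by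
  have hleft : ∀ u a, π (μ (ι u) (s (π a))) = π (μ (ι u) a) := by
    intro u a
    obtain ⟨v, ha⟩ := hs a
    conv_rhs => rw [ha]
    simp only [map_add, ← hι, hπι, add_zero]
  have hright : ∀ u a, π (μ (s (π a)) (ι u)) = π (μ a (ι u)) := by
    intro u a
    obtain ⟨v, ha⟩ := hs a
    conv_rhs => rw [ha]
    simp only [map_add, LinearMap.add_apply, ← hι, hπι, add_zero]
  constructor
  · intro u v w
    simp only [hleft, hι, ← map_sub]
    exact congrArg π (by linear_combination (norm := module) -hμ (ι u) (ι v) (s w))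
  · intro u v w
    simp only [hleft, hright, hι, ← map_sub]
    exact congrArg π (by linear_combination (norm := module) -hμ (ι u) (s w) (ι v))

section Semidirect

variable {g V : Type*} [AddCommGroup g] [Module K g] [AddCommGroup V] [Module K V]

def semidirectMul (m : g →ₗ[K] g →ₗ[K] g) (L R : g →ₗ[K] Module.End K V) :
    g × V →ₗ[K] g × V →ₗ[K] g × V :=
  LinearMap.mk₂ K (fun a b => (m a.1 b.1, L a.1 b.2 + R b.1 a.2))
    (by intros; ext <;> simp [add_add_add_comm])
    (by intros; ext <;> simp [smul_add])
    (by intros; ext <;> simp [add_add_add_comm])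
    (by intros; ext <;> simp [smul_add])

@[simp]
theorem semidirectMul_apply (m : g →ₗ[K] g →ₗ[K] g) (L R : g →ₗ[K] Module.End K V)
    (a b : g × V) : semidirectMul m L R a b = (m a.1 b.1, L a.1 b.2 + R b.1 a.2) :=
  rfl

theorem preLieFn_semidirectMul {m : g →ₗ[K] g →ₗ[K] g} (hm : PreLieFn (fun x y => m x y))
    {L R : g →ₗ[K] Module.End K V}
    (hb : BimodFn (fun x y => m x y) (fun x u => L x u) (fun x u => R x u)) :
    PreLieFn (fun a b => semidirectMul m L R a b) := by
  obtain ⟨hL, hR⟩ := hb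
  rintro ⟨x, u⟩ ⟨y, v⟩ ⟨z, w⟩
  ext
  · exact hm x y z
  · simp only [semidirectMul_apply, Prod.snd_sub, map_add]
    linear_combination (norm := module) -hL x y w - hR x z v + hR y z u

end Semidirect

end

/-- for an O-operator T, (g; 𝔏^T, ℜ^T) is a bimodule over the
pre-Lie algebra (V, ·^T), where 𝔏^T_u x = T(u)·x − T(R_x u) and
ℜ^T_u x = x·T(u) − T(L_x u). -/
theorem oop_induced_bimodule {K g V : Type*} [Field K]
    [AddCommGroup g] [Module K g] [AddCommGroup V] [Module K V]
    (m : g →ₗ[K] g →ₗ[K] g) (hm : PreLieFn (fun x y => m x y))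
    (L R : g →ₗ[K] Module.End K V)
    (hb : BimodFn (fun x y => m x y) (fun x u => L x u) (fun x u => R x u))
    (T : V →ₗ[K] g) (hT : IsOOp m L R T) :
    BimodFn (fun u v : V => L (T u) v + R (T v) u)
      (fun (u : V) (x : g) => m (T u) x - T (R x u))
      (fun (u : V) (x : g) => m x (T u) - T (L x u)) := by
  have hgraph : ∀ u v, (T (L (T u) v + R (T v) u), L (T u) v + R (T v) u)
      = semidirectMul m L R (T u, u) (T v, v) := by
    intro u v
    simp [hT u v]
  have hquot := (preLieFn_semidirectMul hm hb).bimodFn_quotient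
    (n := fun u v => L (T u) v + R (T v) u) (ι := fun u => (T u, u)) hgraph
    (π := LinearMap.fst K g V - T ∘ₗ LinearMap.snd K g V) (by simp)
    (s := fun x => (x, 0)) (fun a => ⟨a.2, by ext <;> simp⟩)
  simpa using hquot
end
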